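/- arXiv:2004.06032 — 2 statements merged into one kernel-verified Lean document; each statement's English description precedes it below -/
import Mathlib

section
/- Let P be even with 0 < P ≤ n, let c ∈ Z_{1+P/2} and d ∈ Z_2. Then the constrained shifted VT code C_CSVT(n, P; c, d) is an (n, 2; D_1)-reconstruction code; that is, for all distinct codewords x, y ∈ C_CSVT(n, P; c, d), we have |D_1(x) ∩ D_1(y)| ≤ 1. -/
/-- The `t`-deletion ball of a binary word `x`: all subsequences of `x`
of length `|x| - t` (empty when `t > |x|`). -/
def deletionBall (t : ℕ) (x : List Bool) : Set (List Bool) :=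
  {z | z.Sublist x ∧ z.length + t = x.length}

/-- The VT syndrome `∑_{i=1}^n i·x_i` (1-indexed). -/
def synd (x : List Bool) : ℕ :=
  ∑ i ∈ Finset.range x.length, (i + 1) * (if x.getD i false then 1 else 0)

/-- The Hamming weight `∑_{i=1}^n x_i`. -/
def wt (x : List Bool) : ℕ :=
  ∑ i ∈ Finset.range x.length, (if x.getD i false then 1 else 0)

/-- A word is 2-periodic if every symbol equals the symbol two positions later. -/
def TwoPeriodic (z : List Bool) : Prop :=
  ∀ k, k + 2 < z.length → z.getD k false = z.getD (k + 2) false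

/-- The constrained shifted VT code `C_CSVT(n, P; c, d)`. -/
def CSVT (n P c d : ℕ) : Set (List Bool) :=
  {x | x.length = n ∧ synd x % (1 + P / 2) = c ∧ wt x % 2 = d ∧
    ∀ z : List Bool, z <:+: x → TwoPeriodic z → z.length ≤ P}

/-! Two distinct words sharing two distinct single-deletion subsequences agree outside a window
in which one carries an alternating segment `a (!a) a (!a) …` and the other its complement; this is
proved by stripping common first letters, after which each tail is a deletion of the other word.
In a codeword the window is a 2-periodic run, so its length `m` is at most `P`. Equal weight
parity forces `m = 2k`, and complementing the window then shifts the VT syndrome by exactly `k`,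
where `0 < k ≤ P/2 < 1 + P/2`. -/

def alternating : Bool → ℕ → List Bool
  | _, 0 => []
  | a, m + 1 => a :: alternating (!a) m

@[simp]
lemma length_alternating (a : Bool) (m : ℕ) : (alternating a m).length = m := by
  induction m generalizing a <;> simp [alternating, *]

lemma getD_alternating {a : Bool} {m k : ℕ} (hk : k < m) :
    (alternating a m).getD k false = if Even k then a else !a := by
  induction m generalizing a k with
  | zero => omega
  | succ m ih =>
    cases k with
    | zero => simp [alternating]
    | succ k =>
      simp only [alternating, List.getD_cons_succ, ih (Nat.lt_of_succ_lt_succ hk),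
        Nat.even_add_one]
      cases a <;> split_ifs <;> simp_all

lemma twoPeriodic_alternating (a : Bool) (m : ℕ) : TwoPeriodic (alternating a m) := by
  intro k hk
  rw [length_alternating] at hk
  simp only [getD_alternating hk, getD_alternating (lt_of_le_of_lt (Nat.le_add_right k 2) hk),
    Nat.even_add, even_two, iff_true]

@[simp]
lemma wt_nil : wt [] = 0 := rfl

@[simp]
lemma wt_cons (b : Bool) (l : List Bool) : wt (b :: l) = (if b then 1 else 0) + wt l := by
  simp only [wt, List.length_cons, Finset.sum_range_succ', List.getD_cons_succ,
    List.getD_cons_zero]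
  ring

lemma synd_cons (b : Bool) (l : List Bool) :
    synd (b :: l) = (if b then 1 else 0) + synd l + wt l := by
  simp only [synd, wt, List.length_cons, Finset.sum_range_succ', List.getD_cons_succ,
    List.getD_cons_zero, add_mul, one_mul, Finset.sum_add_distrib]
  ring

lemma wt_append (s t : List Bool) : wt (s ++ t) = wt s + wt t := by
  induction s with
  | nil => simp
  | cons b s ih => simp only [List.cons_append, wt_cons, ih]; ring

lemma synd_append (s t : List Bool) :
    synd (s ++ t) = synd s + synd t + s.length * wt t := by
  induction s with
  | nil => simp [synd]
  | cons b s ih => simp only [List.cons_append, synd_cons, wt_append, ih, List.length_cons]; ring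

lemma wt_alternating_add_wt_alternating_not (a : Bool) (m : ℕ) :
    wt (alternating a m) + wt (alternating (!a) m) = m := by
  induction m generalizing a with
  | zero => rfl
  | succ m ih =>
    have := ih (!a)
    cases a <;> simp [alternating] at this ⊢ <;> omega

lemma wt_alternating_two_mul (a : Bool) (k : ℕ) : wt (alternating a (2 * k)) = k := by
  induction k generalizing a with
  | zero => rfl
  | succ k ih =>
    rw [Nat.mul_succ]
    cases a <;> simp [alternating, ih] <;> omega

lemma synd_alternating_false_two_mul (k : ℕ) :
    synd (alternating false (2 * k)) = synd (alternating true (2 * k)) + k := by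
  induction k with
  | zero => rfl
  | succ k ih =>
    rw [Nat.mul_succ]
    simp [alternating, synd_cons, wt_alternating_two_mul, ih]
    omega

lemma deletionBall_one_nil : deletionBall 1 [] = ∅ := by
  ext z
  simp [deletionBall]

lemma mem_deletionBall_one_cons {a : Bool} {x z : List Bool} :
    z ∈ deletionBall 1 (a :: x) ↔ z = x ∨ ∃ z₀ ∈ deletionBall 1 x, z = a :: z₀ := by
  simp only [deletionBall, Set.mem_ofPred_eq, List.length_cons, Nat.add_right_cancel_iff]
  constructor
  · rintro ⟨hsub, hlen⟩
    cases hsub with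
    | cons _ hsub => exact Or.inl (hsub.eq_of_length hlen)
    | cons_cons _ hsub => exact Or.inr ⟨_, ⟨hsub, by simpa using hlen⟩, rfl⟩
  · rintro (rfl | ⟨z₀, ⟨hsub, hlen⟩, rfl⟩)
    · exact ⟨List.sublist_cons_self a z, rfl⟩
    · exact ⟨hsub.cons_cons a, by simpa using hlen⟩

lemma deletionBall_one_inter_cons_subset_image {a : Bool} {x y : List Bool} (hxy : x ≠ y) :
    deletionBall 1 (a :: x) ∩ deletionBall 1 (a :: y) ⊆
      (a :: ·) '' (deletionBall 1 x ∩ deletionBall 1 y) := by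
  rintro z ⟨hzx, hzy⟩
  rw [mem_deletionBall_one_cons] at hzx hzy
  rcases hzx with rfl | ⟨z₀, hz₀, rfl⟩ <;> rcases hzy with hzy | ⟨z₁, hz₁, hzy⟩
  · exact absurd hzy hxy
  -- a deletion of the head of `a :: x` still starts with `a`, since here `x = a :: z₁`
  · subst hzy
    exact ⟨z₁, ⟨mem_deletionBall_one_cons.2 (Or.inl rfl), hz₁⟩, rfl⟩
  · subst hzy
    exact ⟨z₀, ⟨hz₀, mem_deletionBall_one_cons.2 (Or.inl rfl)⟩, rfl⟩
  · obtain rfl := (List.cons.inj hzy).2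
    exact ⟨z₀, ⟨hz₀, hz₁⟩, rfl⟩

lemma deletionBall_one_inter_cons_subset_pair {a b : Bool} {x y : List Bool} (hab : a ≠ b) :
    deletionBall 1 (a :: x) ∩ deletionBall 1 (b :: y) ⊆ {x, y} := by
  rintro z ⟨hzx, hzy⟩
  rw [mem_deletionBall_one_cons] at hzx hzy
  rcases hzx with rfl | ⟨z₀, -, rfl⟩
  · exact Or.inl rfl
  rcases hzy with rfl | ⟨z₁, -, hz⟩
  · exact Or.inr rfl
  · exact absurd (List.cons.inj hz).1 hab

lemma mem_deletionBall_one_of_nontrivial_of_ne {a b : Bool} {x y : List Bool} (hab : a ≠ b)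
    (h : (deletionBall 1 (a :: x) ∩ deletionBall 1 (b :: y)).Nontrivial) :
    x ∈ deletionBall 1 (b :: y) ∧ y ∈ deletionBall 1 (a :: x) := by
  obtain ⟨z, hz, z', hz', hne⟩ := h
  have hsub := deletionBall_one_inter_cons_subset_pair (x := x) (y := y) hab
  rcases hsub hz with rfl | rfl <;> rcases hsub hz' with rfl | rfl
  · exact absurd rfl hne
  · exact ⟨hz.2, hz'.1⟩
  · exact ⟨hz'.2, hz.1⟩
  · exact absurd rfl hne

lemma exists_alternating_prefix {a : Bool} {x y : List Bool}
    (hx : x ∈ deletionBall 1 ((!a) :: y)) (hy : y ∈ deletionBall 1 (a :: x)) :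
    ∃ m v, 0 < m ∧ a :: x = alternating a m ++ v ∧ (!a) :: y = alternating (!a) m ++ v := by
  induction x generalizing a y with
  | nil =>
    rcases mem_deletionBall_one_cons.1 hx with rfl | ⟨_, _, h⟩
    · exact ⟨1, [], one_pos, rfl, rfl⟩
    · cases h
  | cons c w ih =>
    rw [mem_deletionBall_one_cons] at hx hy
    rcases hx with rfl | ⟨w₀, hw, hcw⟩
    · exact ⟨1, _, one_pos, rfl, rfl⟩
    obtain ⟨rfl, rfl⟩ := List.cons.inj hcw
    rcases hy with rfl | ⟨w', hw', rfl⟩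
    · exact ⟨1, _, one_pos, rfl, rfl⟩
    obtain ⟨m, v, -, h₁, h₂⟩ := ih (a := !a) (by rwa [Bool.not_not]) hw'
    rw [Bool.not_not] at h₂
    exact ⟨m + 1, v, m.succ_pos, by simp [alternating, h₁], by simp [alternating, h₂]⟩

theorem exists_eq_alternating_of_nontrivial {x y : List Bool} (hxy : x ≠ y)
    (h : (deletionBall 1 x ∩ deletionBall 1 y).Nontrivial) :
    ∃ u a m v, 0 < m ∧ x = u ++ alternating a m ++ v ∧ y = u ++ alternating (!a) m ++ v := by
  induction x generalizing y with
  | nil => simp [deletionBall_one_nil] at h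
  | cons a x ih =>
    cases y with
    | nil => simp [deletionBall_one_nil] at h
    | cons b y =>
      by_cases hab : a = b
      · subst hab
        have hxy' : x ≠ y := fun h => hxy (h ▸ rfl)
        obtain ⟨u, c, m, v, hm, rfl, rfl⟩ := ih hxy' (Set.nontrivial_of_image _ _
          (h.mono (deletionBall_one_inter_cons_subset_image hxy')))
        exact ⟨a :: u, c, m, v, hm, rfl, rfl⟩
      · obtain rfl : b = !a := by cases a <;> cases b <;> simp_all
        obtain ⟨hx, hy⟩ := mem_deletionBall_one_of_nontrivial_of_ne hab h
        obtain ⟨m, v, hm, hxv, hyv⟩ := exists_alternating_prefix hx hy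
        exact ⟨[], a, m, v, hm, by simpa using hxv, by simpa using hyv⟩

lemma two_dvd_of_wt_mod_two_eq {u v : List Bool} {a : Bool} {m : ℕ}
    (h : wt (u ++ alternating a m ++ v) % 2 = wt (u ++ alternating (!a) m ++ v) % 2) :
    2 ∣ m := by
  have := wt_alternating_add_wt_alternating_not a m
  simp only [wt_append] at h
  omega

lemma synd_append_alternating_false_append (u v : List Bool) (k : ℕ) :
    synd (u ++ alternating false (2 * k) ++ v) =
      synd (u ++ alternating true (2 * k) ++ v) + k := by
  simp only [synd_append, List.length_append, length_alternating, wt_alternating_two_mul,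
    synd_alternating_false_two_mul]
  ring

theorem stmt3_general (n P c d : ℕ) :
    ∀ x ∈ CSVT n P c d, ∀ y ∈ CSVT n P c d, x ≠ y →
      (deletionBall 1 x ∩ deletionBall 1 y).ncard ≤ 1 := by
  rintro x ⟨-, hxc, hxd, hxP⟩ y ⟨-, hyc, hyd, -⟩ hxy
  have hsub : (deletionBall 1 x ∩ deletionBall 1 y).Subsingleton := by
    refine Set.not_nontrivial_iff.1 fun h => ?_
    obtain ⟨u, a, m, v, hm, rfl, rfl⟩ := exists_eq_alternating_of_nontrivial hxy h
    have hmP : m ≤ P := by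
      simpa using hxP _ ⟨u, v, rfl⟩ (twoPeriodic_alternating a m)
    obtain ⟨k, rfl⟩ := two_dvd_of_wt_mod_two_eq (hxd.trans hyd.symm)
    have hsynd : synd (u ++ alternating a (2 * k) ++ v) ≡
        synd (u ++ alternating (!a) (2 * k) ++ v) [MOD 1 + P / 2] := hxc.trans hyc.symm
    have hdvd : 1 + P / 2 ∣ k := by
      cases a
      · rwa [Bool.not_false, synd_append_alternating_false_append, Nat.add_modEq_left_iff] at hsynd
      · rwa [Bool.not_true, synd_append_alternating_false_append, Nat.left_modEq_add_iff] at hsynd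
    have hk := Nat.le_of_dvd (by omega) hdvd
    omega
  exact (Set.ncard_le_one hsub.finite).2 fun _ ha _ hb => hsub ha hb

theorem stmt3 (n P c d : ℕ) (hP0 : 0 < P) (hPn : P ≤ n) (hPeven : 2 ∣ P)
    (hc : c < 1 + P / 2) (hd : d < 2) :
    ∀ x ∈ CSVT n P c d, ∀ y ∈ CSVT n P c d, x ≠ y →
      (deletionBall 1 x ∩ deletionBall 1 y).ncard ≤ 1 :=
  stmt3_general n P c d
end

section
/- Fix ℓ ≥ 1 and n with 2ℓ ≤ n, and set m = ⌊n/(2ℓ)⌋ and r = n − 2ℓm. Let Λ ⊆ {0,1}^{2ℓ} consist of the 2ℓ words (01)^j(10)^{ℓ−j} and (10)^j(01)^{ℓ−j} for 1 ≤ j ≤ ℓ, and let Λ̃ = {0,1}^{2ℓ} \ Λ. Divide each word of length n into m blocks of length 2ℓ followed by one block of length r. For each triple z = (u, w, i) with u ∈ Λ̃^{i−1}, w ∈ {0,1}^{2ℓ(m−i)+r} and 1 ≤ i ≤ m, let Q_z^{(0)} = { u·(01)^j(10)^{ℓ−j}·w : 1 ≤ j ≤ ℓ } and Q_z^{(1)}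 = { u·(10)^j(01)^{ℓ−j}·w : 1 ≤ j ≤ ℓ }. Then: (a) any two distinct words in the same set Q_z^{(0)} (or in the same Q_z^{(1)}) are Type-A-confusable; and (b) every binary word of length n either has all of its first m blocks in Λ̃, or belongs to Q_z^{(0)} or Q_z^{(1)} for some such triple z. In particular, the singletons {x} for x ∈ Λ̃^m × {0,1}^r together with the sets Q_z^{(0)}, Q_z^{(1)} form a clique cover of the graph on {0,1}^n in which two words are adjacent exactly when they are Type-A-confusable. -/
/-- `x` and `y` are Type-A-confusable: `x = u·a·v` and `y = u·ā·v` for an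
alternating word `a` of length at least 2. -/
def TypeAConfusable (x y : List Bool) : Prop :=
  ∃ u a v : List Bool, 2 ≤ a.length ∧ List.Chain' (· ≠ ·) a ∧
    x = u ++ a ++ v ∧ y = u ++ a.map (!·) ++ v

/-- The word `(01)^j (10)^{ℓ-j}`. -/
def pat0 (ℓ j : ℕ) : List Bool :=
  (List.replicate j [false, true]).flatten ++ (List.replicate (ℓ - j) [true, false]).flatten

/-- The word `(10)^j (01)^{ℓ-j}`. -/
def pat1 (ℓ j : ℕ) : List Bool :=
  (List.replicate j [true, false]).flatten ++ (List.replicate (ℓ - j) [false, true]).flatten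

/-- `Λ`: the `2ℓ` words `(01)^j(10)^{ℓ-j}` and `(10)^j(01)^{ℓ-j}`, `1 ≤ j ≤ ℓ`. -/
def Lam (ℓ : ℕ) : Set (List Bool) :=
  {z | ∃ j, 1 ≤ j ∧ j ≤ ℓ ∧ (z = pat0 ℓ j ∨ z = pat1 ℓ j)}

/-!
With `altWord b d = (b b̄)^d` we have `pat0 ℓ j = altWord 0 j ++ altWord 1 (ℓ - j)`. For `j < j'`
the words `pat0 ℓ j` and `pat0 ℓ j'` share the prefix `altWord 0 j` and the suffix
`altWord 1 (ℓ - j')`, and between them one carries the alternating word `altWord 1 (j' - j)` and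
the other its complement `altWord 0 (j' - j)`; likewise for `pat1`. Part (b) is a first-occurrence
argument: cut `x` at the first of its first `m` blocks that lies in `Λ`.
-/

def altWord (b : Bool) (d : ℕ) : List Bool := (List.replicate d [b, !b]).flatten

lemma altWord_succ (b : Bool) (d : ℕ) : altWord b (d + 1) = b :: (!b) :: altWord b d := by
  simp [altWord, List.replicate_succ]

lemma length_altWord (b : Bool) (d : ℕ) : (altWord b d).length = 2 * d := by
  simp [altWord, List.length_flatten]
  omega

lemma altWord_add (b : Bool) (d e : ℕ) : altWord b (d + e) = altWord b d ++ altWord b e := by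
  rw [altWord, altWord, altWord, List.replicate_add, List.flatten_append]

lemma map_not_altWord (b : Bool) (d : ℕ) : (altWord b d).map (!·) = altWord (!b) d := by
  induction d with
  | zero => rfl
  | succ d ih => simp [altWord_succ, ih]

lemma isChain_ne_not_cons_altWord (b : Bool) (d : ℕ) :
    List.IsChain (· ≠ ·) ((!b) :: altWord b d) := by
  induction d with
  | zero => exact List.isChain_singleton _
  | succ d ih =>
    rw [altWord_succ, List.isChain_cons_cons, List.isChain_cons_cons]
    exact ⟨Bool.not_ne_self b, (Bool.not_ne_self b).symm, ih⟩

lemma isChain_ne_altWord (b : Bool) (d : ℕ) : List.IsChain (· ≠ ·) (altWord b d) :=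
  (isChain_ne_not_cons_altWord b d).tail

lemma TypeAConfusable.symm {x y : List Bool} (h : TypeAConfusable x y) : TypeAConfusable y x := by
  obtain ⟨u, a, v, ha, hchain, rfl, rfl⟩ := h
  refine ⟨u, a.map (!·), v, by simpa using ha, ?_, rfl, by simp [Function.comp_def]⟩
  exact List.isChain_map_of_isChain _ (fun a b hab => by simpa using hab) hchain

lemma typeAConfusable_altWord_of_lt (b : Bool) {ℓ j j' : ℕ} (hjj' : j < j') (hj' : j' ≤ ℓ)
    (u w : List Bool) :
    TypeAConfusable (u ++ (altWord b j ++ altWord (!b) (ℓ - j)) ++ w)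
      (u ++ (altWord b j' ++ altWord (!b) (ℓ - j')) ++ w) := by
  refine ⟨u ++ altWord b j, altWord (!b) (j' - j), altWord (!b) (ℓ - j') ++ w,
    by rw [length_altWord]; omega, isChain_ne_altWord _ _, ?_, ?_⟩
  · rw [show ℓ - j = (j' - j) + (ℓ - j') by omega, altWord_add]
    simp
  · rw [map_not_altWord, Bool.not_not, show j' = j + (j' - j) by omega, altWord_add]
    simp

lemma typeAConfusable_altWord_of_ne (b : Bool) {ℓ j j' : ℕ} (hj : j ≤ ℓ) (hj' : j' ≤ ℓ)
    (hne : j ≠ j') (u w : List Bool) :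
    TypeAConfusable (u ++ (altWord b j ++ altWord (!b) (ℓ - j)) ++ w)
      (u ++ (altWord b j' ++ altWord (!b) (ℓ - j')) ++ w) := by
  rcases hne.lt_or_gt with h | h
  · exact typeAConfusable_altWord_of_lt b h hj' u w
  · exact (typeAConfusable_altWord_of_lt b h hj u w).symm

section Blocks

variable {α : Type*}

def blockAt (s k : ℕ) (x : List α) : List α := (x.drop (s * k)).take s

lemma blockAt_take (x : List α) {s k p : ℕ} (h : s * k + s ≤ p) :
    blockAt s k (x.take p) = blockAt s k x := by
  rw [blockAt, blockAt, List.drop_take, List.take_take, min_eq_left (by omega)]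

lemma take_append_blockAt_append_drop (x : List α) (s k : ℕ) :
    x.take (s * k) ++ blockAt s k x ++ x.drop (s * k + s) = x := by
  rw [blockAt, List.append_assoc, ← List.drop_drop, List.take_append_drop, List.take_append_drop]

theorem forall_blockAt_not_mem_or_exists_first (S : Set (List α)) {s m : ℕ} {x : List α}
    (hx : s * m ≤ x.length) :
    (∀ i, 1 ≤ i → i ≤ m → blockAt s (i - 1) x ∉ S) ∨
    ∃ i u v w, 1 ≤ i ∧ i ≤ m ∧ u.length = s * (i - 1) ∧
      (∀ k, 1 ≤ k → k ≤ i - 1 → blockAt s (k - 1) u ∉ S) ∧ v ∈ S ∧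
      w.length = x.length - s * i ∧ x = u ++ v ++ w := by
  classical
  by_cases hall : ∀ i, 1 ≤ i → i ≤ m → blockAt s (i - 1) x ∉ S
  · exact .inl hall
  push Not at hall
  set i := Nat.find hall
  obtain ⟨hi1, him, hiS⟩ := Nat.find_spec hall
  have hmin : ∀ k < i, ¬(1 ≤ k ∧ k ≤ m ∧ blockAt s (k - 1) x ∈ S) := fun k => Nat.find_min hall
  have hsi : s * (i - 1) + s = s * i := by
    rw [← Nat.mul_add_one, Nat.sub_add_cancel hi1]
  have him' : s * i ≤ s * m := Nat.mul_le_mul_left s him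
  refine .inr ⟨i, x.take (s * (i - 1)), blockAt s (i - 1) x, x.drop (s * (i - 1) + s),
    hi1, him, ?_, fun k hk1 hki => ?_, hiS, ?_, (take_append_blockAt_append_drop x s _).symm⟩
  · rw [List.length_take]
    omega
  · have hk : s * (k - 1) + s ≤ s * (i - 1) := by
      rw [← Nat.mul_add_one]
      exact Nat.mul_le_mul_left s (by omega)
    rw [blockAt_take x hk]
    exact fun hkS => hmin k (by omega) ⟨hk1, by omega, hkS⟩
  · rw [List.length_drop, hsi]

end Blocks

theorem stmt5_general (ℓ n : ℕ) :
    -- (a) any two distinct words in the same `Q_z^{(0)}` (resp. `Q_z^{(1)}`)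
    -- are Type-A-confusable
    (∀ (u w : List Bool) (j j' : ℕ), 1 ≤ j → j ≤ ℓ → 1 ≤ j' → j' ≤ ℓ → j ≠ j' →
      TypeAConfusable (u ++ pat0 ℓ j ++ w) (u ++ pat0 ℓ j' ++ w) ∧
      TypeAConfusable (u ++ pat1 ℓ j ++ w) (u ++ pat1 ℓ j' ++ w)) ∧
    -- (b) every word of length `n` either has all of its first `m = ⌊n/(2ℓ)⌋` blocks
    -- outside `Λ`, or lies in some `Q_z^{(0)}` or `Q_z^{(1)}`
    (∀ x : List Bool, x.length = n →
      (∀ i, 1 ≤ i → i ≤ n / (2 * ℓ) → ((x.drop (2 * ℓ * (i - 1))).take (2 * ℓ)) ∉ Lam ℓ) ∨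
      (∃ (i j : ℕ) (u w : List Bool), 1 ≤ i ∧ i ≤ n / (2 * ℓ) ∧ 1 ≤ j ∧ j ≤ ℓ ∧
        u.length = 2 * ℓ * (i - 1) ∧
        (∀ k, 1 ≤ k → k ≤ i - 1 → ((u.drop (2 * ℓ * (k - 1))).take (2 * ℓ)) ∉ Lam ℓ) ∧
        w.length = 2 * ℓ * (n / (2 * ℓ) - i) + (n - 2 * ℓ * (n / (2 * ℓ))) ∧
        (x = u ++ pat0 ℓ j ++ w ∨ x = u ++ pat1 ℓ j ++ w))) := by
  refine ⟨fun u w j j' _ hj _ hj' hne => ⟨?_, ?_⟩, fun x hx => ?_⟩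
  · exact typeAConfusable_altWord_of_ne false hj hj' hne u w
  · exact typeAConfusable_altWord_of_ne true hj hj' hne u w
  have hmn : 2 * ℓ * (n / (2 * ℓ)) ≤ x.length := hx ▸ Nat.mul_div_le n (2 * ℓ)
  refine (forall_blockAt_not_mem_or_exists_first (Lam ℓ) hmn).imp id ?_
  rintro ⟨i, u, v, w, hi1, him, hu, hpre, ⟨j, hj1, hjℓ, hv⟩, hw, rfl⟩
  refine ⟨i, j, u, w, hi1, him, hj1, hjℓ, hu, hpre, ?_, ?_⟩
  · have him' := Nat.mul_le_mul_left (2 * ℓ) him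
    rw [hw, hx, Nat.mul_sub]
    omega
  · rcases hv with rfl | rfl
    exacts [.inl rfl, .inr rfl]

theorem stmt5 (ℓ n : ℕ) (hℓ : 1 ≤ ℓ) (hn : 2 * ℓ ≤ n) :
    -- (a) any two distinct words in the same `Q_z^{(0)}` (resp. `Q_z^{(1)}`)
    -- are Type-A-confusable
    (∀ (u w : List Bool) (j j' : ℕ), 1 ≤ j → j ≤ ℓ → 1 ≤ j' → j' ≤ ℓ → j ≠ j' →
      TypeAConfusable (u ++ pat0 ℓ j ++ w) (u ++ pat0 ℓ j' ++ w) ∧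
      TypeAConfusable (u ++ pat1 ℓ j ++ w) (u ++ pat1 ℓ j' ++ w)) ∧
    -- (b) every word of length `n` either has all of its first `m = ⌊n/(2ℓ)⌋` blocks
    -- outside `Λ`, or lies in some `Q_z^{(0)}` or `Q_z^{(1)}`
    (∀ x : List Bool, x.length = n →
      (∀ i, 1 ≤ i → i ≤ n / (2 * ℓ) → ((x.drop (2 * ℓ * (i - 1))).take (2 * ℓ)) ∉ Lam ℓ) ∨
      (∃ (i j : ℕ) (u w : List Bool), 1 ≤ i ∧ i ≤ n / (2 * ℓ) ∧ 1 ≤ j ∧ j ≤ ℓ ∧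
        u.length = 2 * ℓ * (i - 1) ∧
        (∀ k, 1 ≤ k → k ≤ i - 1 → ((u.drop (2 * ℓ * (k - 1))).take (2 * ℓ)) ∉ Lam ℓ) ∧
        w.length = 2 * ℓ * (n / (2 * ℓ) - i) + (n - 2 * ℓ * (n / (2 * ℓ))) ∧
        (x = u ++ pat0 ℓ j ++ w ∨ x = u ++ pat1 ℓ j ++ w))) :=
  stmt5_general ℓ n
end
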